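/- Let Y be finite and let p_D, p_n be full-support probability distributions on Y. Define α(y) = p_n(y)·σ(ξ*(y)) with ξ*(y) = log(p_D(y)/p_n(y)). Then Σ_y α(y) = Σ_y p_n(y)·p_D(y)/(p_n(y)+p_D(y)) ≤ 1/2, with equality iff p_n = p_D. -/

import Mathlib

/-! The logistic weight of `ξ* = log (p_D / p_n)` turns each summand into the half harmonic mean
`p_n p_D / (p_n + p_D)`, which falls short of the quarter arithmetic mean `(p_n + p_D) / 4` by
exactly `(p_n - p_D)² / (4 (p_n + p_D))`. Summing, `1/2 - Σ α = Σ (p_n - p_D)² / (4 (p_n + p_D))`,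
a sum of nonnegative terms that vanishes iff `p_n = p_D` pointwise. -/

noncomputable def sigmoid (z : ℝ) : ℝ := 1 / (1 + Real.exp (-z))

lemma mul_sigmoid_log_div {a b : ℝ} (ha : 0 < a) (hb : 0 < b) :
    a * sigmoid (Real.log (b / a)) = a * b / (a + b) := by
  rw [sigmoid, ← Real.log_inv, Real.exp_log (by positivity)]
  field_simp
  ring

lemma add_div_four_sub_mul_div_add {a b : ℝ} (h : a + b ≠ 0) :
    (a + b) / 4 - a * b / (a + b) = (a - b) ^ 2 / (4 * (a + b)) := by
  field_simp
  ring

lemma sq_sub_div_add_eq_zero_iff {a b : ℝ} (h : a + b ≠ 0) :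
    (a - b) ^ 2 / (4 * (a + b)) = 0 ↔ a = b := by
  rw [div_eq_zero_iff, or_iff_left (mul_ne_zero four_ne_zero h), pow_eq_zero_iff two_ne_zero,
    sub_eq_zero]

theorem alpha_sum_bound_general {Y : Type*} [Fintype Y]
    (pD pn : Y → ℝ) (hpD : ∀ y, 0 < pD y) (hpn : ∀ y, 0 < pn y)
    (hDs : ∑ y, pD y = 1) (hns : ∑ y, pn y = 1) :
    (∑ y, pn y * sigmoid (Real.log (pD y / pn y)))
      = ∑ y, pn y * pD y / (pn y + pD y) ∧
    (∑ y, pn y * pD y / (pn y + pD y)) ≤ 1 / 2 ∧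
    ((∑ y, pn y * pD y / (pn y + pD y)) = 1 / 2 ↔ pn = pD) := by
  have hsum (y : Y) : pn y + pD y ≠ 0 := (add_pos (hpn y) (hpD y)).ne'
  have gap : 1 / 2 - ∑ y, pn y * pD y / (pn y + pD y)
      = ∑ y, (pn y - pD y) ^ 2 / (4 * (pn y + pD y)) := by
    have half : ∑ y, (pn y + pD y) / 4 = 1 / 2 := by
      rw [← Finset.sum_div, Finset.sum_add_distrib, hns, hDs]
      norm_num
    rw [← half, ← Finset.sum_sub_distrib]
    exact Finset.sum_congr rfl fun y _ ↦ add_div_four_sub_mul_div_add (hsum y)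
  have gap_nonneg : ∀ y ∈ Finset.univ, 0 ≤ (pn y - pD y) ^ 2 / (4 * (pn y + pD y)) :=
    fun y _ ↦ by have := hpn y; have := hpD y; positivity
  refine ⟨Finset.sum_congr rfl fun y _ ↦ mul_sigmoid_log_div (hpn y) (hpD y), ?_, ?_⟩
  · linarith [Finset.sum_nonneg gap_nonneg]
  · rw [eq_comm, ← sub_eq_zero, gap, Finset.sum_eq_zero_iff_of_nonneg gap_nonneg, funext_iff]
    simp only [Finset.mem_univ, true_imp_iff, sq_sub_div_add_eq_zero_iff (hsum _)]

theorem alpha_sum_bound {Y : Type*} [Fintype Y] [Nonempty Y]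
    (pD pn : Y → ℝ) (hpD : ∀ y, 0 < pD y) (hpn : ∀ y, 0 < pn y)
    (hDs : ∑ y, pD y = 1) (hns : ∑ y, pn y = 1) :
    (∑ y, pn y * sigmoid (Real.log (pD y / pn y)))
      = ∑ y, pn y * pD y / (pn y + pD y) ∧
    (∑ y, pn y * pD y / (pn y + pD y)) ≤ 1 / 2 ∧
    ((∑ y, pn y * pD y / (pn y + pD y)) = 1 / 2 ↔ pn = pD) :=
  alpha_sum_bound_general pD pn hpD hpn hDs hns
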